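/- Let F be a field with char(F) ≠ 2 and 𝓥 ⊆ F^{[n]∪[n]*} a Lagrangian subspace with respect to the form ⟨X, Y*⟩. Then 𝓥 is an orthogonal F-vector set. -/
import Mathlib


open scoped Classical

/-- The ground set `E = [n] ∪ [n]*`: `(i, true)` encodes `i ∈ [n]` and `(i, false)` encodes
`i* ∈ [n]*`. -/
abbrev OE (n : ℕ) := Fin n × Bool

/-- The involution `* : E → E`. -/
def ostar {n : ℕ} (x : OE n) : OE n := (x.1, !x.2)

/-- The divergence `{x, x*}`. -/
def pairS {n : ℕ} (x : OE n) : Finset (OE n) := {x, ostar x}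

/-- `A` is admissible (a subtransversal): `A ∩ A* = ∅`. -/
def IsAdmissible {n : ℕ} (A : Finset (OE n)) : Prop := ∀ x ∈ A, ostar x ∉ A

/-- A transversal: an admissible set of size `n`. -/
def IsTransversal {n : ℕ} (T : Finset (OE n)) : Prop := T.card = n ∧ IsAdmissible T

/-- `𝓑` is the set of bases of an orthogonal matroid on `E = [n] ∪ [n]*`: a nonempty
collection of transversals satisfying the symmetric exchange axiom. -/
def IsOrthoMatroid {n : ℕ} (𝓑 : Set (Finset (OE n))) : Prop :=
  𝓑.Nonempty ∧ (∀ B ∈ 𝓑, IsTransversal B) ∧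
  ∀ B₁ ∈ 𝓑, ∀ B₂ ∈ 𝓑, ∀ x : OE n,
    x ∈ symmDiff B₁ B₂ → ostar x ∈ symmDiff B₁ B₂ →
    ∃ y : OE n, y ∈ symmDiff B₁ B₂ ∧ ostar y ∈ symmDiff B₁ B₂ ∧
      pairS y ≠ pairS x ∧ symmDiff B₁ (pairS x ∪ pairS y) ∈ 𝓑

/-- An admissible set is independent if it is contained in some basis. -/
def IsIndep {n : ℕ} (𝓑 : Set (Finset (OE n))) (I : Finset (OE n)) : Prop := ∃ B ∈ 𝓑, I ⊆ B

/-- A circuit: a minimal dependent admissible set. -/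
def IsCircuit {n : ℕ} (𝓑 : Set (Finset (OE n))) (C : Finset (OE n)) : Prop :=
  IsAdmissible C ∧ ¬ IsIndep 𝓑 C ∧ ∀ D ⊂ C, IsIndep 𝓑 D

/-- The support of a vector `X ∈ F^E`. -/
noncomputable def suppV {n : ℕ} {F : Type} [Zero F] (X : OE n → F) : Finset (OE n) :=
  Finset.univ.filter (fun e => X e ≠ 0)

/-- `X*`, defined by `X*(i) = X(i*)`. -/
def starV {n : ℕ} {F : Type} (X : OE n → F) : OE n → F := fun e => X (ostar e)

/-- `conj(X)`: apply the involution `σ` on the `[n]*`-coordinates only. -/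
def conjV {n : ℕ} {F : Type} (σ : F → F) (X : OE n → F) : OE n → F :=
  fun e => if e.2 = true then X e else σ (X e)

/-- The inner product `⟨X, Y⟩ = Σ_{i ∈ [n]} (X(i)·σ(Y(i)) + σ(X(i*))·Y(i*))` over a field. -/
def finner {n : ℕ} {F : Type} [Field F] (σ : F → F) (X Y : OE n → F) : F :=
  ∑ i : Fin n, (X (i, true) * σ (Y (i, true)) + σ (X (i, false)) * Y (i, false))

/-- `X` is elementary in `𝓦 ⊆ F^E`: it is a nonzero member of `𝓦` with admissible support
which is minimal among the supports of nonzero members of `𝓦`. -/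
def IsElem {n : ℕ} {F : Type} [Zero F] (𝓦 : Set (OE n → F)) (X : OE n → F) : Prop :=
  X ∈ 𝓦 ∧ X ≠ 0 ∧ IsAdmissible (suppV X) ∧
  ∀ Y ∈ 𝓦, Y ≠ 0 → suppV Y ⊆ suppV X → suppV Y = suppV X

/-- A transversal `B` is a support basis of `𝓥` if no nonzero member of `𝓥` has support
contained in `B`. -/
def IsSupportBasis {n : ℕ} {F : Type} [Zero F] (𝓥 : Set (OE n → F))
    (B : Finset (OE n)) : Prop :=
  IsTransversal B ∧ ∀ X ∈ 𝓥, X ≠ 0 → ¬ suppV X ⊆ B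

/-- A fundamental circuit form for `𝓥` with respect to a support basis `B`. -/
def IsFCF {n : ℕ} {F : Type} [Zero F] [One F] (𝓥 : Set (OE n → F)) (B : Finset (OE n))
    (Xf : OE n → (OE n → F)) : Prop :=
  ∀ e : OE n, e ∉ B → Xf e ∈ 𝓥 ∧ suppV (Xf e) ⊆ symmDiff B (pairS e) ∧ Xf e e = 1

/-- `X` lies in the linear span of the family `V` indexed by `S` (over a field). -/
def FSpanOver {n : ℕ} {F : Type} [Field F] (S : Finset (OE n))
    (V : OE n → (OE n → F)) (X : OE n → F) : Prop :=
  ∃ c : OE n → F, ∀ e : OE n, X e = ∑ i ∈ S, c i * V i e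

/-- `𝓥 ⊆ F^E` is an orthogonal `F`-vector set over a field `F` with involution `σ`:
(V1) elementary vectors with small support intersection pair to `0` under `⟨·, (·)*⟩`;
(V2) support bases exist and admit fundamental circuit forms; (V3) `𝓥` is exactly the set of
vectors `X` such that for every support basis and fundamental circuit form, `conj(X)` lies in
the linear span of the conjugated fundamental circuit form. -/
def IsOrthoVectorSetF {n : ℕ} {F : Type} [Field F] (σ : F → F)
    (𝓥 : Set (OE n → F)) : Prop :=
  (∀ X Y : OE n → F, IsElem 𝓥 X → IsElem 𝓥 Y →
    (suppV X ∩ (suppV Y).image ostar).card ≤ 2 → finner σ X (starV Y) = 0) ∧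
  (∃ B : Finset (OE n), IsSupportBasis 𝓥 B) ∧
  (∀ B : Finset (OE n), IsSupportBasis 𝓥 B → ∃ Xf, IsFCF 𝓥 B Xf) ∧
  (∀ X : OE n → F, X ∈ 𝓥 ↔
    ∀ (B : Finset (OE n)) (Xf : OE n → (OE n → F)), IsSupportBasis 𝓥 B → IsFCF 𝓥 B Xf →
      FSpanOver (Finset.univ.filter (fun e => e ∉ B)) (fun e => conjV σ (Xf e)) (conjV σ X))

section Aux

variable {n : ℕ} {F : Type} [Field F]

lemma ostar_ostar (x : OE n) : ostar (ostar x) = x := by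
  simp [ostar]

lemma ostar_ne (x : OE n) : ostar x ≠ x := by
  rcases x with ⟨i, b⟩; cases b <;> simp [ostar]

lemma ostar_fst (x : OE n) : (ostar x).1 = x.1 := rfl

lemma mem_suppV {X : OE n → F} {f : OE n} : f ∈ suppV X ↔ X f ≠ 0 := by
  simp [suppV]

lemma suppV_subset_iff {X : OE n → F} {T : Finset (OE n)} :
    suppV X ⊆ T ↔ ∀ f ∉ T, X f = 0 := by
  constructor
  · intro h f hf
    by_contra h0
    exact hf (h (mem_suppV.2 h0))
  · intro h f hf
    by_contra hfT
    exact mem_suppV.1 hf (h f hfT)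

lemma eq_or_ostar_of_fst_eq {x y : OE n} (h : x.1 = y.1) : y = x ∨ y = ostar x := by
  rcases x with ⟨i, a⟩; rcases y with ⟨j, b⟩
  cases h
  cases a <;> cases b <;> simp [ostar]

lemma transversal_exactly_one {T : Finset (OE n)} (hT : IsTransversal T) (i : Fin n) :
    ∃ b : Bool, (i, b) ∈ T ∧ (i, !b) ∉ T := by
  have hinj : Set.InjOn Prod.fst (T : Set (OE n)) := by
    intro x hx y hy hxy
    rcases eq_or_ostar_of_fst_eq hxy with h | h
    · exact h.symm
    · exact absurd (h ▸ hy) (hT.2 x hx)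
  have hcard : (T.image Prod.fst).card = n := by
    rw [Finset.card_image_of_injOn hinj, hT.1]
  have huniv : T.image Prod.fst = Finset.univ := by
    apply Finset.eq_univ_of_card
    simp [hcard]
  have : i ∈ T.image Prod.fst := huniv ▸ Finset.mem_univ i
  obtain ⟨x, hx, hxi⟩ := Finset.mem_image.1 this
  refine ⟨x.2, ?_, ?_⟩
  · rwa [show (i, x.2) = x by rw [← hxi]]
  · rw [show ((i, !x.2) : OE n) = ostar x by rw [← hxi]; rfl]
    exact hT.2 x hx

lemma ostar_mem_of_notMem {T : Finset (OE n)} (hT : IsTransversal T) {x : OE n}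
    (hx : x ∉ T) : ostar x ∈ T := by
  obtain ⟨b, hb, hnb⟩ := transversal_exactly_one hT x.1
  rcases x with ⟨i, a⟩
  cases a <;> cases b <;> simp_all [ostar]

def suppSub (T : Finset (OE n)) : Submodule F (OE n → F) where
  carrier := {X | ∀ f ∉ T, X f = 0}
  add_mem' := by intro a b ha hb f hf; simp [ha f hf, hb f hf]
  zero_mem' := fun f _ => rfl
  smul_mem' := by intro c X hX f hf; simp [hX f hf]

lemma mem_suppSub {T : Finset (OE n)} {X : OE n → F} :
    X ∈ (suppSub T : Submodule F (OE n → F)) ↔ ∀ f ∉ T, X f = 0 := Iff.rfl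

lemma finner_swap_eval {T : Finset (OE n)} (hT : IsTransversal T) {e : OE n} (he : e ∈ T)
    {X Y : OE n → F} (hX : ∀ f ∉ T, X f = 0)
    (hY : ∀ f ∉ insert (ostar e) (T.erase e), Y f = 0) :
    finner (fun x => x) X (starV Y) = X e * Y (ostar e) := by
  have heY : Y e = 0 := by
    apply hY
    simp only [Finset.mem_insert, Finset.mem_erase, not_or]
    exact ⟨Ne.symm (ostar_ne e), fun h => h.1 rfl⟩
  have hXstar : X (ostar e) = 0 := hX _ (hT.2 e he)
  unfold finner starV
  rw [Finset.sum_eq_single e.1]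
  · rcases e with ⟨i, b⟩
    have h1 : ostar ((i, true) : OE n) = (i, false) := rfl
    have h2 : ostar ((i, false) : OE n) = (i, true) := rfl
    simp only [starV, h1, h2]
    cases b
    · rw [h2] at hXstar ⊢
      rw [hXstar, heY]; ring
    · rw [h1] at hXstar ⊢
      rw [hXstar, heY]; ring
  · intro i _ hne
    obtain ⟨b, hb, hnb⟩ := transversal_exactly_one hT i
    have hXnb : X (i, !b) = 0 := hX _ hnb
    have hYnb : Y (i, !b) = 0 := by
      apply hY
      simp only [Finset.mem_insert, Finset.mem_erase, not_or]
      constructor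
      · intro h
        exact hne (by rw [← ostar_fst e, ← h])
      · intro h
        exact hnb h.2
    have h1 : ostar ((i, true) : OE n) = (i, false) := rfl
    have h2 : ostar ((i, false) : OE n) = (i, true) := rfl
    simp only [starV, h1, h2]
    cases b
    · simp only [Bool.not_false] at hXnb hYnb
      rw [hXnb, hYnb]; ring
    · simp only [Bool.not_true] at hXnb hYnb
      rw [hXnb, hYnb]; ring
  · intro h
    exact absurd (Finset.mem_univ e.1) h


lemma finner_self_eval {B : Finset (OE n)} (hB : IsTransversal B) {e : OE n} (he : e ∉ B)
    {X : OE n → F} (hX : ∀ f, f ∉ B → f ≠ e → X f = 0) :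
    finner (fun x => x) X (starV X) = 2 * (X e * X (ostar e)) := by
  unfold finner starV
  rw [Finset.sum_eq_single e.1]
  · rcases e with ⟨i, b⟩
    have h1 : ostar ((i, true) : OE n) = (i, false) := rfl
    have h2 : ostar ((i, false) : OE n) = (i, true) := rfl
    simp only [h1, h2]
    cases b
    · rw [h2]; ring
    · rw [h1]; ring
  · intro i _ hne
    obtain ⟨b, hb, hnb⟩ := transversal_exactly_one hB i
    have hXnb : X (i, !b) = 0 := by
      apply hX _ hnb
      intro h
      exact hne (by rw [← h])
    have h1 : ostar ((i, true) : OE n) = (i, false) := rfl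
    have h2 : ostar ((i, false) : OE n) = (i, true) := rfl
    simp only [h1, h2]
    cases b
    · simp only [Bool.not_false] at hXnb
      rw [hXnb]; ring
    · simp only [Bool.not_true] at hXnb
      rw [hXnb]; ring
  · intro h
    exact absurd (Finset.mem_univ e.1) h

lemma swap_transversal {T : Finset (OE n)} (hT : IsTransversal T) {e : OE n} (he : e ∈ T) :
    IsTransversal (insert (ostar e) (T.erase e)) := by
  have hse : ostar e ∉ T := hT.2 e he
  constructor
  · rw [Finset.card_insert_of_notMem (fun h => hse (Finset.mem_of_mem_erase h)),
      Finset.card_erase_of_mem he, hT.1]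
    have : 0 < n := hT.1 ▸ Finset.card_pos.2 ⟨e, he⟩
    omega
  · intro x hx hsx
    rcases Finset.mem_insert.1 hx with h | h
    · subst h
      rw [ostar_ostar] at hsx
      rcases Finset.mem_insert.1 hsx with h | h
      · exact ostar_ne e h.symm
      · exact (Finset.mem_erase.1 h).1 rfl
    · have hxT := Finset.mem_of_mem_erase h
      rcases Finset.mem_insert.1 hsx with h2 | h2
      · have : x = e := by
          have := congrArg ostar h2
          rwa [ostar_ostar, ostar_ostar] at this
        exact (Finset.mem_erase.1 h).1 this
      · exact hT.2 x hxT (Finset.mem_of_mem_erase h2)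

lemma swap_step {V : Submodule F (OE n → F)}
    (hlag : ∀ X ∈ V, ∀ Y ∈ V, finner (fun x => x) X (starV Y) = 0)
    {T : Finset (OE n)} (hT : IsTransversal T)
    {X : OE n → F} (hXV : X ∈ V) (hX0 : X ≠ 0) (hXs : ∀ f ∉ T, X f = 0) :
    ∃ T' : Finset (OE n), IsTransversal T' ∧
      (V ⊓ suppSub T' : Submodule F (OE n → F)) < V ⊓ suppSub T := by
  obtain ⟨e, he0⟩ := Function.ne_iff.1 hX0
  have he : e ∈ T := by
    by_contra h
    exact he0 (hXs e h)
  refine ⟨insert (ostar e) (T.erase e), swap_transversal hT he, ?_⟩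
  rw [SetLike.lt_iff_le_and_exists]
  constructor
  · rintro Y ⟨hYV, hYs⟩
    refine ⟨hYV, fun f hf => ?_⟩
    by_cases hfe : f = ostar e
    · subst hfe
      have h0 := hlag X hXV Y hYV
      rw [finner_swap_eval hT he hXs hYs] at h0
      exact (mul_eq_zero.1 h0).resolve_left he0
    · apply hYs
      simp only [Finset.mem_insert, Finset.mem_erase, not_or]
      exact ⟨hfe, fun h => hf h.2⟩
  · refine ⟨X, ⟨hXV, hXs⟩, fun h => ?_⟩
    apply he0
    apply h.2
    simp only [Finset.mem_insert, Finset.mem_erase, not_or]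
    exact ⟨Ne.symm (ostar_ne e), fun h => h.1 rfl⟩


lemma exists_supportBasis {V : Submodule F (OE n → F)}
    (hlag : ∀ X ∈ V, ∀ Y ∈ V, finner (fun x => x) X (starV Y) = 0) :
    ∃ B : Finset (OE n), IsSupportBasis (V : Set (OE n → F)) B := by
  have hT0 : IsTransversal (Finset.univ.image (fun i : Fin n => ((i, true) : OE n))) := by
    constructor
    · rw [Finset.card_image_of_injective _ (fun a b h => (Prod.mk.injEq _ _ _ _ ▸ h).1)]
      · simp
    · intro x hx hsx
      obtain ⟨i, _, hi⟩ := Finset.mem_image.1 hx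
      obtain ⟨j, _, hj⟩ := Finset.mem_image.1 hsx
      rw [← hi] at hj
      exact absurd ((Prod.mk.injEq _ _ _ _ ▸ hj).2).symm (by simp [ostar])
  suffices h : ∀ d : ℕ, ∀ T : Finset (OE n), IsTransversal T →
      Module.finrank F ↥(V ⊓ suppSub T : Submodule F (OE n → F)) ≤ d →
      ∃ B : Finset (OE n), IsSupportBasis (V : Set (OE n → F)) B by
    exact h _ _ hT0 le_rfl
  intro d
  induction d with
  | zero =>
    intro T hT hrk
    refine ⟨T, hT, fun X hXV hX0 hXs => ?_⟩
    have hbot : (V ⊓ suppSub T : Submodule F (OE n → F)) = ⊥ :=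
      Submodule.finrank_eq_zero.1 (Nat.le_zero.1 hrk)
    have : X ∈ (V ⊓ suppSub T : Submodule F (OE n → F)) :=
      ⟨hXV, suppV_subset_iff.1 hXs⟩
    rw [hbot] at this
    exact hX0 this
  | succ d ih =>
    intro T hT hrk
    by_cases hdone : ∀ X ∈ V, X ≠ 0 → ¬ suppV X ⊆ T
    · exact ⟨T, hT, hdone⟩
    · push_neg at hdone
      obtain ⟨X, hXV, hX0, hXs⟩ := hdone
      obtain ⟨T', hT', hlt⟩ := swap_step hlag hT hXV hX0 (suppV_subset_iff.1 hXs)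
      apply ih T' hT'
      have := Submodule.finrank_lt_finrank_of_lt hlt
      omega


lemma exists_FCF {V : Submodule F (OE n → F)} (hchar : (2 : F) ≠ 0)
    (hdim : Module.finrank F ↥V = n)
    (hlag : ∀ X ∈ V, ∀ Y ∈ V, finner (fun x => x) X (starV Y) = 0)
    {B : Finset (OE n)} (hB : IsSupportBasis (V : Set (OE n → F)) B) :
    ∃ Xf, IsFCF (V : Set (OE n → F)) B Xf := by
  have key : ∀ e, e ∉ B → ∃ X : OE n → F, X ∈ V ∧ (∀ f, f ∉ B → f ≠ e → X f = 0) ∧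
      X e = 1 ∧ X (ostar e) = 0 := by
    intro e he
    let φ : ↥V →ₗ[F] ({ x // x ∈ Bᶜ } → F) :=
      (LinearMap.funLeft F F (fun x : { x // x ∈ Bᶜ } => (x : OE n))).comp V.subtype
    have hφ : ∀ (v : ↥V) (x : { x // x ∈ Bᶜ }), φ v x = (v : OE n → F) (x : OE n) :=
      fun v x => rfl
    have hinj : Function.Injective φ := by
      rw [injective_iff_map_eq_zero]
      intro v hv
      by_contra hv0
      apply hB.2 (v : OE n → F) v.2
      · intro h
        exact hv0 (Subtype.ext h)
      · rw [suppV_subset_iff]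
        intro f hf
        have := congrFun hv ⟨f, Finset.mem_compl.2 hf⟩
        simpa [hφ] using this
    have hcard : Module.finrank F ({ x // x ∈ Bᶜ } → F) = n := by
      rw [Module.finrank_fintype_fun_eq_card, Fintype.card_coe, Finset.card_compl, hB.1.1]
      have : Fintype.card (OE n) = n * 2 := by simp
      omega
    have hsurj : Function.Surjective φ :=
      (LinearMap.injective_iff_surjective_of_finrank_eq_finrank
        (by rw [hdim, hcard])).1 hinj
    obtain ⟨v, hv⟩ := hsurj (fun x => if (x : OE n) = e then 1 else 0)
    have hvan : ∀ f, f ∉ B → f ≠ e → (v : OE n → F) f = 0 := by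
      intro f hf hfe
      have := congrFun hv ⟨f, Finset.mem_compl.2 hf⟩
      simpa [hφ, hfe] using this
    have hXe : (v : OE n → F) e = 1 := by
      have := congrFun hv ⟨e, Finset.mem_compl.2 he⟩
      simpa [hφ] using this
    have hXse : (v : OE n → F) (ostar e) = 0 := by
      have h0 := hlag (v : OE n → F) v.2 (v : OE n → F) v.2
      rw [finner_self_eval hB.1 he hvan, hXe, one_mul] at h0
      exact (mul_eq_zero.1 h0).resolve_left hchar
    exact ⟨(v : OE n → F), v.2, hvan, hXe, hXse⟩
  choose Xc h1 h2 h3 h4 using key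
  refine ⟨fun e => if he : e ∈ B then 0 else Xc e he, fun e he => ?_⟩
  simp only [dif_neg he]
  refine ⟨h1 e he, ?_, h3 e he⟩
  rw [suppV_subset_iff]
  intro f hf
  rw [Finset.mem_symmDiff] at hf
  push_neg at hf
  by_cases hfB : f ∈ B
  · have hfp : f ∈ pairS e := hf.1 hfB
    rcases Finset.mem_insert.1 hfp with h | h
    · exact absurd (h ▸ hfB) he
    · rw [Finset.mem_singleton.1 h]
      exact h4 e he
  · refine h2 e he f hfB (fun h => ?_)
    apply hfB
    apply hf.2
    rw [h]
    exact Finset.mem_insert_self _ _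

omit [Field F] in
lemma conjV_id (X : OE n → F) : conjV (fun x => x) X = X := by
  funext f
  unfold conjV
  split <;> rfl

end Aux

/-- Over a field `F` of characteristic `≠ 2` (with the trivial involution), every Lagrangian
subspace `𝓥` of `F^{2n}` with respect to the form `⟨X, Y*⟩ = Σ_i (X(i)Y(i*) + X(i*)Y(i))` —
an `n`-dimensional subspace on which the form vanishes — is an orthogonal `F`-vector set. -/
theorem lagrangian_isOrthoVectorSet {n : ℕ} {F : Type} [Field F]
    (hchar : (2 : F) ≠ 0)
    (V : Submodule F (OE n → F)) (hdim : Module.finrank F ↥V = n)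
    (hlag : ∀ X ∈ V, ∀ Y ∈ V, finner (fun x => x) X (starV Y) = 0) :
    IsOrthoVectorSetF (fun x => x) (V : Set (OE n → F)) := by

  classical
  have hVset : ∀ X : OE n → F, X ∈ (V : Set (OE n → F)) ↔ X ∈ V := fun _ => Iff.rfl
  refine ⟨fun X Y hX hY _ => hlag X hX.1 Y hY.1, exists_supportBasis hlag,
    fun B hB => exists_FCF hchar hdim hlag hB, fun X => ⟨?_, ?_⟩⟩
  · -- forward direction
    intro hXV B Xf hB hXf
    set S : Finset (OE n) := Finset.univ.filter (fun e => e ∉ B) with hS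
    have hmemS : ∀ i, i ∈ S ↔ i ∉ B := by
      intro i; simp [hS]
    have hW : (fun f => ∑ i ∈ S, X i * Xf i f) ∈ V := by
      have : (fun f => ∑ i ∈ S, X i * Xf i f) = ∑ i ∈ S, X i • Xf i := by
        funext f
        simp [Finset.sum_apply]
      rw [this]
      exact Submodule.sum_mem V (fun i hi => Submodule.smul_mem V _ ((hXf i ((hmemS i).1 hi)).1))
    have hD : (fun f => X f - ∑ i ∈ S, X i * Xf i f) ∈ V := Submodule.sub_mem V hXV hW
    have hDvan : ∀ f, f ∉ B → X f - ∑ i ∈ S, X i * Xf i f = 0 := by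
      intro f hf
      rw [Finset.sum_eq_single f]
      · rw [(hXf f hf).2.2, mul_one, sub_self]
      · intro i hi hif
        have hiB : i ∉ B := (hmemS i).1 hi
        have hXfi : Xf i f = 0 := by
          apply suppV_subset_iff.1 (hXf i hiB).2.1
          rw [Finset.mem_symmDiff]
          push_neg
          constructor
          · intro h; exact absurd h hf
          · intro h
            rcases Finset.mem_insert.1 h with h' | h'
            · exact (hif h'.symm).elim
            · rw [Finset.mem_singleton.1 h']
              exact ostar_mem_of_notMem hB.1 hiB
        rw [hXfi, mul_zero]
      · intro h
        exact absurd ((hmemS f).2 hf) h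
    have hDzero : (fun f => X f - ∑ i ∈ S, X i * Xf i f) = 0 := by
      by_contra h0
      exact hB.2 _ hD h0 (suppV_subset_iff.2 (fun f hf => hDvan f hf))
    refine ⟨fun i => X i, fun f => ?_⟩
    have := congrFun hDzero f
    simp only [conjV_id, Pi.zero_apply, sub_eq_zero] at this ⊢
    exact this
  · -- backward direction
    intro h
    obtain ⟨B, hB⟩ := exists_supportBasis hlag
    obtain ⟨Xf, hXf⟩ := exists_FCF hchar hdim hlag hB
    obtain ⟨c, hc⟩ := h B Xf hB hXf
    simp only [conjV_id] at hc
    have : X = ∑ i ∈ Finset.univ.filter (fun e => e ∉ B), c i • Xf i := by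
      funext f
      rw [hc f]
      simp [Finset.sum_apply]
    rw [hVset, this]
    refine Submodule.sum_mem V (fun i hi => Submodule.smul_mem V _ ?_)
    exact (hXf i (by simpa using hi)).1
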